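/- arXiv:1812.02107 — 2 statements merged into one kernel-verified Lean document; each statement's English description precedes it below -/
import Mathlib

section
/- For every positive integer n, Z(n) = ⌊n·φ⌋ + n − 1, where φ = (1+√5)/2 is the golden ratio. -/
/-- A natural number is *fibbinary* if its binary representation
contains no two consecutive ones. -/
def IsFibbinary (m : ℕ) : Prop :=
  ∀ i : ℕ, ¬(m.testBit i = true ∧ m.testBit (i + 1) = true)

/-- `fibbin n` is the `n`-th fibbinary number, i.e. the `n`-th positive integer
(1-indexed, in increasing order) whose binary representation has no two
consecutive ones. -/
noncomputable def fibbin (n : ℕ) : ℕ :=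
  Nat.nth (fun m => 0 < m ∧ IsFibbinary m) (n - 1)

/-- `odfib n` is the `n`-th odd fibbinary number
(1-indexed, in increasing order). -/
noncomputable def odfib (n : ℕ) : ℕ :=
  Nat.nth (fun m => Odd m ∧ IsFibbinary m) (n - 1)

/-- `Z n` is the index `j` such that the `j`-th fibbinary number equals the
`n`-th odd fibbinary number, i.e. `Z n = fibbin⁻¹ (odfib n)`. -/
noncomputable def Z (n : ℕ) : ℕ :=
  sInf {j : ℕ | 1 ≤ j ∧ fibbin j = odfib n}

/-! Let `x` be fibbinary and `I` the positions of its binary ones. Splitting on the last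
binary digit shows that `∑_{i ∈ I} F(i+2)` fibbinary numbers lie below `x` (`0` included), and
`∑_{i ∈ I} F(i)` odd ones. The `n`-th odd fibbinary number is `4m + 1` with `m` fibbinary, so
with `S_k = ∑_{i ∈ bits m} F(i+k)` this gives `n - 1 = S₂` and `Z n = 1 + S₂ + S₃`. Finally
`F(i+1) = φ F(i) + ψ^i` gives `S₃ = φ S₂ + ψ² r` with `r = ∑_{i ∈ bits m} ψ^i`, and
`-1 < r < φ` because `m` has no two adjacent ones; this pins down `S₃ + 1 = ⌊(S₂ + 1) φ⌋`. -/

open goldenRatio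

theorem isFibbinary_iff_div_two {x : ℕ} :
    IsFibbinary x ↔ IsFibbinary (x / 2) ∧ ¬(x % 2 = 1 ∧ x / 2 % 2 = 1) := by
  constructor
  · intro h
    refine ⟨fun i hi => h (i + 1) ?_, fun h0 => h 0 ?_⟩
    · simpa only [Nat.testBit_add_one] using hi
    · simpa [Nat.testBit_zero, Nat.testBit_add_one] using h0
  · rintro ⟨h, h0⟩ (_ | i) hi
    · exact h0 (by simpa [Nat.testBit_zero, Nat.testBit_add_one] using hi)
    · exact h i (by simpa only [Nat.testBit_add_one] using hi)

theorem isFibbinary_zero : IsFibbinary 0 := by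
  simp [IsFibbinary]

theorem isFibbinary_two_mul_iff {m : ℕ} : IsFibbinary (2 * m) ↔ IsFibbinary m := by
  rw [isFibbinary_iff_div_two]
  simp [Nat.mul_mod_right]

theorem isFibbinary_two_mul_add_one_iff {m : ℕ} :
    IsFibbinary (2 * m + 1) ↔ IsFibbinary m ∧ Even m := by
  rw [isFibbinary_iff_div_two, Nat.even_iff]
  have h_div : (2 * m + 1) / 2 = m := by omega
  have h_mod : (2 * m + 1) % 2 = 1 := by omega
  simp only [h_div, h_mod, true_and, Nat.mod_two_ne_one]

theorem isFibbinary_two_pow (k : ℕ) : IsFibbinary (2 ^ k) := by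
  simp only [IsFibbinary, Nat.testBit_two_pow, decide_eq_true_eq]
  omega

theorem odd_and_isFibbinary_iff {x : ℕ} :
    Odd x ∧ IsFibbinary x ↔ ∃ m, IsFibbinary m ∧ x = 4 * m + 1 := by
  constructor
  · rintro ⟨⟨j, rfl⟩, hx⟩
    obtain ⟨hj, hj_even⟩ := isFibbinary_two_mul_add_one_iff.mp hx
    obtain ⟨k, rfl⟩ := hj_even.two_dvd
    exact ⟨k, isFibbinary_two_mul_iff.mp hj, by ring⟩
  · rintro ⟨m, hm, rfl⟩
    refine ⟨⟨2 * m, by ring⟩, ?_⟩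
    rw [show 4 * m + 1 = 2 * (2 * m) + 1 by ring]
    exact isFibbinary_two_mul_add_one_iff.mpr ⟨isFibbinary_two_mul_iff.mpr hm, even_two_mul m⟩

@[elab_as_elim]
theorem IsFibbinary.induction {P : ℕ → Prop} (zero : P 0)
    (two_mul : ∀ m, IsFibbinary m → P m → P (2 * m))
    (four_mul_add_one : ∀ m, IsFibbinary m → P m → P (4 * m + 1))
    {x : ℕ} (hx : IsFibbinary x) : P x := by
  induction x using Nat.strong_induction_on with
  | _ x ih =>
    by_cases hodd : Odd x
    · obtain ⟨m, hm, rfl⟩ := odd_and_isFibbinary_iff.mp ⟨hodd, hx⟩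
      exact four_mul_add_one m hm (ih m (by omega) hm)
    obtain ⟨m, rfl⟩ := (Nat.not_odd_iff_even.mp hodd).two_dvd
    rcases m.eq_zero_or_pos with rfl | hm_pos
    · exact zero
    have hm := isFibbinary_two_mul_iff.mp hx
    exact two_mul m hm (ih m (by omega) hm)

section BitSum

variable {M : Type*} [AddCommMonoid M]

def bitSum (f : ℕ → M) (x : ℕ) : M :=
  (x.bitIndices.map f).sum

@[simp]
theorem bitSum_zero (f : ℕ → M) : bitSum f 0 = 0 := by
  simp [bitSum]

theorem bitSum_two_mul (f : ℕ → M) (x : ℕ) :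
    bitSum f (2 * x) = bitSum (fun i => f (i + 1)) x := by
  simp [bitSum, Function.comp_def]

theorem bitSum_two_mul_add_one (f : ℕ → M) (x : ℕ) :
    bitSum f (2 * x + 1) = f 0 + bitSum (fun i => f (i + 1)) x := by
  simp [bitSum, Function.comp_def]

theorem bitSum_add (f g : ℕ → M) (x : ℕ) :
    bitSum (fun i => f i + g i) x = bitSum f x + bitSum g x :=
  List.sum_map_add

theorem bitSum_mul_left {R : Type*} [Semiring R] (r : R) (f : ℕ → R) (x : ℕ) :
    bitSum (fun i => r * f i) x = r * bitSum f x :=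
  List.sum_map_mul_left _ _ _

theorem Nat.cast_bitSum {R : Type*} [AddCommMonoidWithOne R] (f : ℕ → ℕ) (x : ℕ) :
    ((bitSum f x : ℕ) : R) = bitSum (fun i => (f i : R)) x := by
  simp [bitSum, Nat.cast_list_sum, Function.comp_def]

end BitSum

def fibBitSum (k x : ℕ) : ℕ :=
  bitSum (fun i => Nat.fib (i + k)) x

@[simp]
theorem fibBitSum_zero (k : ℕ) : fibBitSum k 0 = 0 :=
  bitSum_zero _

theorem fibBitSum_two_mul (k x : ℕ) : fibBitSum k (2 * x) = fibBitSum (k + 1) x := by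
  simp only [fibBitSum, bitSum_two_mul, add_right_comm _ 1 k, add_assoc]

theorem fibBitSum_two_mul_add_one (k x : ℕ) :
    fibBitSum k (2 * x + 1) = Nat.fib k + fibBitSum (k + 1) x := by
  simp only [fibBitSum, bitSum_two_mul_add_one, zero_add, add_right_comm _ 1 k, add_assoc]

theorem fibBitSum_four_mul_add_one (k x : ℕ) :
    fibBitSum k (4 * x + 1) = Nat.fib k + fibBitSum (k + 2) x := by
  rw [show 4 * x + 1 = 2 * (2 * x) + 1 by ring, fibBitSum_two_mul_add_one, fibBitSum_two_mul]

theorem fibBitSum_add_two (k x : ℕ) :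
    fibBitSum (k + 2) x = fibBitSum k x + fibBitSum (k + 1) x := by
  simp only [fibBitSum, ← add_assoc, Nat.fib_add_two, bitSum_add]

theorem fibBitSum_succ_eq_goldenRatio_mul (k x : ℕ) :
    (fibBitSum (k + 1) x : ℝ) = φ * fibBitSum k x + ψ ^ k * bitSum (ψ ^ ·) x := by
  simp only [fibBitSum, Nat.cast_bitSum, ← bitSum_mul_left, ← bitSum_add, ← pow_add]
  congr 1
  ext i
  rw [← add_assoc, ← Real.fib_succ_sub_goldenRatio_mul_fib, add_comm i k]
  ring

theorem bitSum_goldenConj_pow_mem_Ioo {m : ℕ} (hm : IsFibbinary m) :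
    bitSum (ψ ^ ·) m ∈ Set.Ioo (-1) φ := by
  have hψ_sq : ψ * ψ = ψ + 1 := by rw [← sq, Real.goldenConj_sq]
  have hψ_gt := Real.neg_one_lt_goldenConj
  have hφψ := Real.goldenRatio_mul_goldenConj
  have hφ := Real.one_lt_goldenRatio
  have h_even (x : ℕ) : bitSum (ψ ^ ·) (2 * x) = ψ * bitSum (ψ ^ ·) x := by
    simp only [bitSum_two_mul, pow_succ', bitSum_mul_left]
  have h_odd (x : ℕ) : bitSum (ψ ^ ·) (2 * x + 1) = 1 + ψ * bitSum (ψ ^ ·) x := by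
    simp only [bitSum_two_mul_add_one, pow_zero, pow_succ', bitSum_mul_left]
  refine hm.induction ?_ (fun m _ ih => ?_) (fun m _ ih => ?_)
  · simp [hφ.le.trans_lt' zero_lt_one]
  · rw [h_even]
    constructor <;> nlinarith [ih.1, ih.2]
  · rw [show 4 * m + 1 = 2 * (2 * m) + 1 by ring, h_odd, h_even]
    constructor <;> nlinarith [ih.1, ih.2]

theorem floor_fibBitSum_add_one_mul_goldenRatio {m : ℕ} (hm : IsFibbinary m) :
    ⌊((fibBitSum 2 m : ℝ) + 1) * φ⌋ = fibBitSum 3 m + 1 := by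
  obtain ⟨hlo, hhi⟩ := bitSum_goldenConj_pow_mem_Ioo hm
  -- `(S₂ + 1) φ = S₃ + φ - ψ² r`, and `ψ² = 2 - φ` puts `ψ² r` in `(φ - 2, φ - 1)`
  have h := fibBitSum_succ_eq_goldenRatio_mul 2 m
  have hψ_sq : ψ ^ 2 = ψ + 1 := Real.goldenConj_sq
  have hφψ := Real.goldenRatio_add_goldenConj
  have hψ_gt := Real.neg_one_lt_goldenConj
  rw [Int.floor_eq_iff]
  push_cast
  constructor <;> nlinarith

theorem Nat.count_two_mul (p : ℕ → Prop) [DecidablePred p] (n : ℕ) :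
    Nat.count p (2 * n) =
      Nat.count (fun k => p (2 * k)) n + Nat.count (fun k => p (2 * k + 1)) n := by
  induction n with
  | zero => simp
  | succ n ih =>
    rw [show 2 * (n + 1) = 2 * n + 1 + 1 by ring, Nat.count_succ, Nat.count_succ, ih,
      Nat.count_succ, Nat.count_succ]
    ring

noncomputable instance : DecidablePred IsFibbinary := Classical.decPred _

theorem count_isFibbinary_two_mul (n : ℕ) :
    Nat.count IsFibbinary (2 * n) =
      Nat.count IsFibbinary n + Nat.count (fun m => Even m ∧ IsFibbinary m) n := by
  simp only [Nat.count_two_mul, isFibbinary_two_mul_iff, isFibbinary_two_mul_add_one_iff, and_comm]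

theorem count_even_isFibbinary_two_mul (n : ℕ) :
    Nat.count (fun m => Even m ∧ IsFibbinary m) (2 * n) = Nat.count IsFibbinary n := by
  simp [Nat.count_two_mul, isFibbinary_two_mul_iff]

theorem count_odd_isFibbinary_two_mul (n : ℕ) :
    Nat.count (fun m => Odd m ∧ IsFibbinary m) (2 * n) =
      Nat.count (fun m => Even m ∧ IsFibbinary m) n := by
  simp [Nat.count_two_mul, isFibbinary_two_mul_add_one_iff, and_comm, Nat.odd_iff]

theorem count_isFibbinary_eq_fibBitSum {x : ℕ} (hx : IsFibbinary x) :
    Nat.count IsFibbinary x = fibBitSum 2 x ∧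
      Nat.count (fun m => Even m ∧ IsFibbinary m) x = fibBitSum 1 x ∧
      Nat.count (fun m => Odd m ∧ IsFibbinary m) x = fibBitSum 0 x := by
  refine hx.induction ?_ (fun m _ ih => ?_) (fun m hm ih => ?_)
  · simp
  all_goals
    have h2 : fibBitSum 2 m = fibBitSum 0 m + fibBitSum 1 m := fibBitSum_add_two 0 m
    have h3 : fibBitSum 3 m = fibBitSum 1 m + fibBitSum 2 m := fibBitSum_add_two 1 m
    have h4 : fibBitSum 4 m = fibBitSum 2 m + fibBitSum 3 m := fibBitSum_add_two 2 m
  · rw [count_isFibbinary_two_mul, count_even_isFibbinary_two_mul, count_odd_isFibbinary_two_mul]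
    simp only [fibBitSum_two_mul, Nat.reduceAdd]
    omega
  · have h4m : Even (4 * m) ∧ IsFibbinary (4 * m) := by
      rw [show 4 * m = 2 * (2 * m) by ring]
      exact ⟨even_two_mul _, isFibbinary_two_mul_iff.mpr (isFibbinary_two_mul_iff.mpr hm)⟩
    have h4m_odd : ¬(Odd (4 * m) ∧ IsFibbinary (4 * m)) :=
      fun h => Nat.not_odd_iff_even.mpr h4m.1 h.1
    rw [fibBitSum_four_mul_add_one, fibBitSum_four_mul_add_one, fibBitSum_four_mul_add_one,
      Nat.count_succ, Nat.count_succ, Nat.count_succ, if_pos h4m.2, if_pos h4m, if_neg h4m_odd,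
      show 4 * m = 2 * (2 * m) by ring]
    simp only [count_isFibbinary_two_mul, count_even_isFibbinary_two_mul,
      count_odd_isFibbinary_two_mul, Nat.reduceAdd, Nat.fib_zero, Nat.fib_one, Nat.fib_two]
    omega

theorem infinite_pos_isFibbinary : {m : ℕ | 0 < m ∧ IsFibbinary m}.Infinite :=
  Set.infinite_of_forall_exists_gt fun a =>
    ⟨2 ^ a, ⟨Nat.two_pow_pos a, isFibbinary_two_pow a⟩, Nat.lt_two_pow_self⟩

theorem infinite_odd_isFibbinary : {m : ℕ | Odd m ∧ IsFibbinary m}.Infinite :=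
  Set.infinite_of_forall_exists_gt fun a =>
    ⟨4 * 2 ^ a + 1, odd_and_isFibbinary_iff.mpr ⟨_, isFibbinary_two_pow a, rfl⟩,
      by have := @Nat.lt_two_pow_self a; omega⟩

theorem count_isFibbinary_eq_count_pos_add_one {x : ℕ} (hx : 0 < x) :
    Nat.count IsFibbinary x = Nat.count (fun m => 0 < m ∧ IsFibbinary m) x + 1 := by
  obtain ⟨y, rfl⟩ := Nat.exists_eq_add_one_of_ne_zero hx.ne'
  simp [Nat.count_succ', isFibbinary_zero]

theorem fibbin_eq_iff {j x : ℕ} (hj : 1 ≤ j) (hx₀ : 0 < x) (hx : IsFibbinary x) :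
    fibbin j = x ↔ j = Nat.count IsFibbinary x := by
  rw [count_isFibbinary_eq_count_pos_add_one hx₀, fibbin,
    ← Nat.nth_count (p := fun m => 0 < m ∧ IsFibbinary m) ⟨hx₀, hx⟩,
    (Nat.nth_injective infinite_pos_isFibbinary).eq_iff, Nat.nth_count ⟨hx₀, hx⟩]
  omega

theorem odd_and_isFibbinary_odfib (n : ℕ) : Odd (odfib n) ∧ IsFibbinary (odfib n) :=
  Nat.nth_mem_of_infinite infinite_odd_isFibbinary _

theorem Z_eq_count_isFibbinary (n : ℕ) : Z n = Nat.count IsFibbinary (odfib n) := by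
  obtain ⟨hodd, hfib⟩ := odd_and_isFibbinary_odfib n
  have h_count_pos : 1 ≤ Nat.count IsFibbinary (odfib n) := by
    rw [count_isFibbinary_eq_count_pos_add_one hodd.pos]
    omega
  have h_set : {j : ℕ | 1 ≤ j ∧ fibbin j = odfib n} = {Nat.count IsFibbinary (odfib n)} := by
    ext j
    constructor
    · rintro ⟨hj, h⟩
      exact (fibbin_eq_iff hj hodd.pos hfib).mp h
    · rintro rfl
      exact ⟨h_count_pos, (fibbin_eq_iff h_count_pos hodd.pos hfib).mpr rfl⟩
  rw [Z, h_set, csInf_singleton]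

/-- For every positive integer `n`, `Z n = ⌊n·φ⌋ + n − 1`,
where `φ = (1+√5)/2` is the golden ratio. -/
theorem Z_eq_floor_phi_add (n : ℕ) (hn : 1 ≤ n) :
    (Z n : ℤ) = ⌊(n : ℝ) * ((1 + Real.sqrt 5) / 2)⌋ + (n : ℤ) - 1 := by
  obtain ⟨hodd, hfib⟩ := odd_and_isFibbinary_odfib n
  obtain ⟨m, hm, hx⟩ := odd_and_isFibbinary_iff.mp ⟨hodd, hfib⟩
  obtain ⟨h_count, -, h_count_odd⟩ := count_isFibbinary_eq_fibBitSum hfib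
  have h_index : fibBitSum 2 m + 1 = n := by
    have h := Nat.count_nth_of_infinite infinite_odd_isFibbinary (n - 1)
    rw [← odfib, h_count_odd, hx, fibBitSum_four_mul_add_one] at h
    simp only [Nat.fib_zero, zero_add] at h
    omega
  have h_floor := floor_fibBitSum_add_one_mul_goldenRatio hm
  rw [Z_eq_count_isFibbinary, h_count, hx, fibBitSum_four_mul_add_one, fibBitSum_add_two,
    ← h_index]
  push_cast at h_floor ⊢
  rw [show (1 + √5) / 2 = φ from rfl, h_floor, Nat.fib_two]
  ring
end

section
/- For every integer n ≥ 3 and every integer k with 2 ≤ k ≤ F_{n−1}, one has ⌊(F_n + k)·φ²⌋ − ⌊(F_n + k − 1)·φ²⌋ = ⌊k·φ²⌋ − ⌊(k − 1)·φ²⌋, where φ = (1+√5)/2 and F_m denotes the m-th Fibonacci number. -/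
/-!
Write `ψ = (1 - √5)/2`. Binet's formula gives `F_n φ² = F_{n+2} - ψⁿ`, so
`⌊(F_n + j)φ²⌋ = F_{n+2} + ⌊jφ² - ψⁿ⌋`, and the claim follows once the perturbation `ψⁿ` does
not move `⌊jφ²⌋` for `j = k, k - 1`. That holds because `φ` is badly approximable: for an integer
`p`, the product `(jφ - p)(jψ - p) = p² - pj - j²` is a nonzero integer, which forces
`|jφ - p| ≥ 1/(√5 j + 1)`. On the other side, `|ψ| φ = 1` and Binet's formula reduce
`|ψ|ⁿ (√5 j + 1) < 1` for `j ≤ F_{n-1}` to `|ψ| + |ψ|³ + |ψ|⁵ < 1`.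
-/

open Real
open scoped goldenRatio

lemma floor_add_eq_floor_of_abs_lt {x ε : ℝ} (h : ∀ p : ℤ, |ε| < |x - p|) :
    ⌊x + ε⌋ = ⌊x⌋ := by
  have below := h ⌊x⌋
  have above := h (⌊x⌋ + 1)
  push_cast at above
  rw [abs_of_nonneg (sub_nonneg.2 (Int.floor_le x))] at below
  rw [abs_of_neg (a := x - (⌊x⌋ + 1)) (by linarith [Int.lt_floor_add_one x])] at above
  rw [Int.floor_eq_iff]
  constructor <;> linarith [neg_abs_le ε, le_abs_self ε]

lemma fib_mul_goldenRatio_sq (n : ℕ) : (Nat.fib n : ℝ) * φ ^ 2 = Nat.fib (n + 2) - ψ ^ n := by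
  have hfib : (Nat.fib (n + 2) : ℝ) = Nat.fib n + Nat.fib (n + 1) := by
    exact_mod_cast Nat.fib_add_two
  linear_combination (Nat.fib n : ℝ) * goldenRatio_sq - hfib - fib_succ_sub_goldenRatio_mul_fib n

lemma one_le_abs_mul_goldenRatio_sub_mul_abs_mul_goldenConj_sub {q : ℤ} (hq : q ≠ 0) (p : ℤ) :
    1 ≤ |q * φ - p| * |q * ψ - p| := by
  have hprod : (q * φ - p) * (q * ψ - p) = ((p ^ 2 - p * q - q ^ 2 : ℤ) : ℝ) := by
    push_cast
    linear_combination q ^ 2 * goldenRatio_mul_goldenConj - p * q * goldenRatio_add_goldenConj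
  have hφ : q * φ - p ≠ 0 := sub_ne_zero.2 ((goldenRatio_irrational.intCast_mul hq).ne_int p)
  have hψ : q * ψ - p ≠ 0 := sub_ne_zero.2 ((goldenConj_irrational.intCast_mul hq).ne_int p)
  have hint : p ^ 2 - p * q - q ^ 2 ≠ 0 := by
    exact_mod_cast hprod ▸ mul_ne_zero hφ hψ
  rw [← abs_mul, hprod]
  exact_mod_cast Int.one_le_abs hint

lemma inv_le_abs_mul_goldenRatio_sub {q : ℕ} (hq : q ≠ 0) (p : ℤ) :
    (√5 * q + 1)⁻¹ ≤ |q * φ - p| := by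
  have hprod := one_le_abs_mul_goldenRatio_sub_mul_abs_mul_goldenConj_sub
    (Int.natCast_ne_zero.2 hq) p
  push_cast at hprod
  have hconj : |q * ψ - p| ≤ |q * φ - p| + √5 * q := by
    have : q * ψ - p = (q * φ - p) - √5 * q := by
      rw [← goldenRatio_sub_goldenConj]; ring
    rw [this]
    refine (abs_sub _ _).trans_eq ?_
    rw [abs_of_nonneg (a := √5 * q) (by positivity)]
  have hc : 0 ≤ √5 * q := by positivity
  rw [inv_le_iff_one_le_mul₀ (by positivity)]
  by_contra! hlt
  nlinarith [abs_nonneg (q * φ - p), abs_nonneg (q * ψ - p)]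

lemma abs_goldenConj_lt : |ψ| < 0.62 := by
  have hsqrt : √5 < 2.24 := (sqrt_lt' (by norm_num)).2 (by norm_num)
  rw [abs_of_neg goldenConj_neg, goldenConj]
  linarith

lemma abs_goldenConj_pow_mul_lt_one {n j : ℕ} (hn : 2 ≤ n) (hj : j ≤ Nat.fib n) :
    |ψ| ^ (n + 1) * (√5 * j + 1) < 1 := by
  have ht₀ : 0 ≤ |ψ| := abs_nonneg ψ
  have ht₁ : |ψ| < 0.62 := abs_goldenConj_lt
  have htφ : |ψ| * φ = 1 := by
    rw [abs_of_neg goldenConj_neg, neg_mul, goldenConj_mul_goldenRatio, neg_neg]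
  have hbinet : √5 * Nat.fib n = φ ^ n - ψ ^ n := by
    rw [coe_fib_eq, mul_div_cancel₀ _ (by positivity)]
  have hψn : -ψ ^ n ≤ |ψ| ^ n := by
    rw [← abs_pow]; exact neg_le_abs _
  calc |ψ| ^ (n + 1) * (√5 * j + 1)
      ≤ |ψ| ^ (n + 1) * (√5 * Nat.fib n + 1) := by gcongr
    _ = |ψ| * (|ψ| * φ) ^ n + |ψ| ^ (n + 1) * (-ψ ^ n) + |ψ| ^ (n + 1) := by
        rw [hbinet, mul_pow]; ring
    _ ≤ |ψ| + |ψ| ^ (2 * n + 1) + |ψ| ^ (n + 1) := by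
        rw [htφ, one_pow, mul_one, show 2 * n + 1 = (n + 1) + n by ring, pow_add |ψ| (n + 1) n]
        gcongr
    _ ≤ |ψ| + |ψ| ^ 5 + |ψ| ^ 3 := by
        gcongr |ψ| + ?_ + ?_ <;> exact pow_le_pow_of_le_one ht₀ (by linarith) (by omega)
    _ < 1 := by nlinarith [pow_le_pow_left₀ ht₀ ht₁.le 3, pow_le_pow_left₀ ht₀ ht₁.le 5]

lemma floor_fib_add_mul_goldenRatio_sq {n j : ℕ} (hn : 2 ≤ n) (hj₀ : j ≠ 0)
    (hj : j ≤ Nat.fib n) :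
    ⌊((Nat.fib (n + 1) : ℝ) + j) * φ ^ 2⌋ = Nat.fib (n + 3) + ⌊(j : ℝ) * φ ^ 2⌋ := by
  have hsplit : ((Nat.fib (n + 1) : ℝ) + j) * φ ^ 2
      = j * φ ^ 2 + -ψ ^ (n + 1) + Nat.fib (n + 3) := by
    rw [add_mul, fib_mul_goldenRatio_sq]; ring
  rw [hsplit, Int.floor_add_natCast, add_comm, floor_add_eq_floor_of_abs_lt]
  intro p
  calc |-ψ ^ (n + 1)| = |ψ| ^ (n + 1) := by rw [abs_neg, abs_pow]
    _ < (√5 * j + 1)⁻¹ := by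
        rw [← one_div, lt_div_iff₀ (by positivity)]
        exact abs_goldenConj_pow_mul_lt_one hn hj
    _ ≤ |j * φ - (p - j : ℤ)| := inv_le_abs_mul_goldenRatio_sub hj₀ _
    _ = |j * φ ^ 2 - p| := by rw [goldenRatio_sq]; push_cast; ring_nf

/-- For every `n ≥ 3` and `2 ≤ k ≤ F_{n−1}`,
`⌊(F_n + k)·φ²⌋ − ⌊(F_n + k − 1)·φ²⌋ = ⌊k·φ²⌋ − ⌊(k − 1)·φ²⌋`,
where `φ = (1+√5)/2`. -/
theorem floor_diff_phi_sq (n k : ℕ) (hn : 3 ≤ n) (hk1 : 2 ≤ k)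
    (hk2 : k ≤ Nat.fib (n - 1)) :
    ⌊((Nat.fib n : ℝ) + (k : ℝ)) * ((1 + Real.sqrt 5) / 2) ^ 2⌋
      - ⌊((Nat.fib n : ℝ) + (k : ℝ) - 1) * ((1 + Real.sqrt 5) / 2) ^ 2⌋
    = ⌊(k : ℝ) * ((1 + Real.sqrt 5) / 2) ^ 2⌋
      - ⌊((k : ℝ) - 1) * ((1 + Real.sqrt 5) / 2) ^ 2⌋ := by
  obtain ⟨m, rfl⟩ : ∃ m, n = m + 1 := ⟨n - 1, by omega⟩
  obtain ⟨j, rfl⟩ : ∃ j, k = j + 1 := ⟨k - 1, by omega⟩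
  rw [Nat.add_sub_cancel] at hk2
  have hk := floor_fib_add_mul_goldenRatio_sq (by omega) (by omega) hk2
  have hj := floor_fib_add_mul_goldenRatio_sq (n := m) (j := j) (by omega) (by omega) (by omega)
  change ⌊_ * φ ^ 2⌋ - ⌊_ * φ ^ 2⌋ = ⌊_ * φ ^ 2⌋ - ⌊_ * φ ^ 2⌋
  push_cast at hk ⊢
  rw [add_sub_cancel_right, add_sub_assoc, add_sub_cancel_right, hk, hj]
  ring
end
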